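/- arXiv:1908.05582 — 2 statements merged into one kernel-verified Lean document; each statement's English description precedes it below -/
import Mathlib

section
/- Partition-of-unity energy estimate (Lemma 2): Let ω ⊆ ℝ^d be a measurable set, let κ : ℝ^d × ℝ^d → ℝ^d satisfy κ(x,0) = 0 and the Lipschitz condition |κ(x,z) − κ(x,v)| ≤ C₁ κ̄(x)|z − v| (κ̄ ≥ 0, C₁ > 0). Let χ : ℝ^d → ℝ be differentiable with |χ(x)| ≤ 1 for all x, and let κ̃ : ℝ^d → ℝ be a nonnegative measurable weight with κ̄(x)|∇χ(x)|² ≤ κ̃(x) for all x ∈ ω. If u, v : ℝ^d → ℝ are differentiable and all relevant integrands are integrable on ω, then |∫_ω κ(x,∇u(x))·∇(χ v)(x) dx| ≤ C₁ ‖u‖_{a(ω)} (‖v‖_{a(ω)} + ‖v‖_{s(ω)}), where ‖u‖_{a(ω)} = (∫_ω κ̄ |∇u|²)^{1/2} and ‖v‖_{s(ω)} = (∫_ω κ̃ v²)^{1/2}. -/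
/-!
By the product rule the integrand splits as `χ ⟪κ(∇u), ∇v⟫ + v ⟪κ(∇u), ∇χ⟫`. Since `κ(x, 0) = 0`,
the Lipschitz condition gives `‖κ(x, ∇u)‖ ≤ C₁ κ̄ ‖∇u‖`, so the first term is bounded pointwise by
`C₁ √(κ̄‖∇u‖² · κ̄‖∇v‖²)` (as `|χ| ≤ 1`) and the second by `C₁ √(κ̄‖∇u‖² · κ̃ v²)` (as
`κ̄ ‖∇χ‖² ≤ κ̃` on `ω`). Cauchy–Schwarz on `ω` bounds the integral of each.
-/

open MeasureTheory

section CauchySchwarz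

variable {α : Type*} [MeasurableSpace α] {μ : Measure α} {F G : α → ℝ}

theorem MeasureTheory.Integrable.memLp_two_sqrt (hFi : Integrable F μ) (hF : 0 ≤ᵐ[μ] F) :
    MemLp (fun x => √(F x)) 2 μ := by
  refine (memLp_two_iff_integrable_sq
    (Real.continuous_sqrt.comp_aestronglyMeasurable hFi.aestronglyMeasurable)).2 ?_
  refine hFi.congr ?_
  filter_upwards [hF] with x hx using (Real.sq_sqrt hx).symm

theorem sqrt_mul_ae_eq (hF : 0 ≤ᵐ[μ] F) :
    (fun x => √(F x * G x)) =ᵐ[μ] fun x => √(F x) * √(G x) := by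
  filter_upwards [hF] with x hx using Real.sqrt_mul hx _

theorem integral_sqrt_mul_le (hF : 0 ≤ᵐ[μ] F) (hG : 0 ≤ᵐ[μ] G)
    (hFi : Integrable F μ) (hGi : Integrable G μ) :
    ∫ x, √(F x * G x) ∂μ ≤ √(∫ x, F x ∂μ) * √(∫ x, G x ∂μ) := by
  have hsq (H : α → ℝ) (hH : 0 ≤ᵐ[μ] H) : ∫ x, √(H x) ^ (2 : ℝ) ∂μ = ∫ x, H x ∂μ := by
    refine integral_congr_ae ?_
    filter_upwards [hH] with x hx
    rw [Real.rpow_two, Real.sq_sqrt hx]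
  have holder := integral_mul_le_Lp_mul_Lq_of_nonneg Real.HolderConjugate.two_two
    (Filter.Eventually.of_forall fun x => Real.sqrt_nonneg (F x))
    (Filter.Eventually.of_forall fun x => Real.sqrt_nonneg (G x))
    (by simpa using hFi.memLp_two_sqrt hF) (by simpa using hGi.memLp_two_sqrt hG)
  rw [hsq F hF, hsq G hG, ← Real.sqrt_eq_rpow, ← Real.sqrt_eq_rpow] at holder
  rwa [integral_congr_ae (sqrt_mul_ae_eq hF)]

theorem integrable_sqrt_mul (hF : 0 ≤ᵐ[μ] F) (hG : 0 ≤ᵐ[μ] G)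
    (hFi : Integrable F μ) (hGi : Integrable G μ) :
    Integrable (fun x => √(F x * G x)) μ :=
  ((hFi.memLp_two_sqrt hF).integrable_mul (hGi.memLp_two_sqrt hG)).congr (sqrt_mul_ae_eq hF).symm

theorem abs_integral_le_mul_sqrt_mul_sqrt {f : α → ℝ} {C : ℝ} (hC : 0 ≤ C)
    (hF : 0 ≤ᵐ[μ] F) (hG : 0 ≤ᵐ[μ] G) (hFi : Integrable F μ) (hGi : Integrable G μ)
    (hf : ∀ᵐ x ∂μ, |f x| ≤ C * √(F x * G x)) :
    |∫ x, f x ∂μ| ≤ C * √(∫ x, F x ∂μ) * √(∫ x, G x ∂μ) := by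
  by_cases hfi : Integrable f μ
  swap
  · rw [integral_undef hfi, abs_zero]; positivity
  calc |∫ x, f x ∂μ| ≤ ∫ x, |f x| ∂μ := abs_integral_le_integral_abs
    _ ≤ ∫ x, C * √(F x * G x) ∂μ :=
      integral_mono_ae hfi.abs ((integrable_sqrt_mul hF hG hFi hGi).const_mul C) hf
    _ = C * ∫ x, √(F x * G x) ∂μ := integral_const_mul _ _
    _ ≤ C * √(∫ x, F x ∂μ) * √(∫ x, G x ∂μ) := by
      rw [mul_assoc]; exact mul_le_mul_of_nonneg_left (integral_sqrt_mul_le hF hG hFi hGi) hC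

end CauchySchwarz

theorem gradient_mul {E : Type*} [NormedAddCommGroup E] [InnerProductSpace ℝ E] [CompleteSpace E]
    {f g : E → ℝ} {x : E} (hf : DifferentiableAt ℝ f x) (hg : DifferentiableAt ℝ g x) :
    gradient (fun y => f y * g y) x = f x • gradient g x + g x • gradient f x := by
  have hderiv : fderiv ℝ (fun y => f y * g y) x = f x • fderiv ℝ g x + g x • fderiv ℝ f x :=
    (hf.hasFDerivAt.mul hg.hasFDerivAt).fderiv
  simp only [gradient, hderiv, map_add, map_smul]

theorem abs_mul_inner_le_mul_sqrt {E : Type*} [NormedAddCommGroup E] [InnerProductSpace ℝ E]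
    {K p q : E} {s C k T : ℝ} (hC : 0 ≤ C) (hk : 0 ≤ k) (hK : ‖K‖ ≤ C * (k * ‖p‖))
    (hT : k * ‖q‖ ^ 2 * s ^ 2 ≤ T) :
    |s * inner ℝ K q| ≤ C * √(k * ‖p‖ ^ 2 * T) := by
  have hsqrt : √(k * ‖p‖ ^ 2 * (k * ‖q‖ ^ 2 * s ^ 2)) = k * ‖p‖ * ‖q‖ * |s| := by
    rw [← sq_abs s, show k * ‖p‖ ^ 2 * (k * ‖q‖ ^ 2 * |s| ^ 2) = (k * ‖p‖ * ‖q‖ * |s|) ^ 2 by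
      ring]
    exact Real.sqrt_sq (by positivity)
  calc |s * inner ℝ K q| ≤ ‖K‖ * ‖q‖ * |s| := by
        rw [abs_mul, mul_comm |s|]
        exact mul_le_mul_of_nonneg_right (abs_real_inner_le_norm K q) (abs_nonneg s)
    _ ≤ C * (k * ‖p‖) * ‖q‖ * |s| := by gcongr
    _ = C * √(k * ‖p‖ ^ 2 * (k * ‖q‖ ^ 2 * s ^ 2)) := by rw [hsqrt]; ring
    _ ≤ C * √(k * ‖p‖ ^ 2 * T) := by gcongr

theorem partition_of_unity_energy_estimate_general
    {d : ℕ} (ω : Set (EuclideanSpace ℝ (Fin d))) (hω : MeasurableSet ω)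
    (κ : EuclideanSpace ℝ (Fin d) → EuclideanSpace ℝ (Fin d) → EuclideanSpace ℝ (Fin d))
    (hκ0 : ∀ x, κ x 0 = 0)
    (κbar : EuclideanSpace ℝ (Fin d) → ℝ) (hκbar : ∀ x, 0 ≤ κbar x)
    (C₁ : ℝ) (hC₁ : 0 < C₁)
    (hlip : ∀ x z v, ‖κ x z - κ x v‖ ≤ C₁ * (κbar x * ‖z - v‖))
    (χ : EuclideanSpace ℝ (Fin d) → ℝ) (hχ : Differentiable ℝ χ)
    (hχ_bdd : ∀ x, |χ x| ≤ 1)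
    (κtilde : EuclideanSpace ℝ (Fin d) → ℝ)
    (hκtilde : ∀ x, 0 ≤ κtilde x)
    (hdom : ∀ x ∈ ω, κbar x * ‖gradient χ x‖ ^ 2 ≤ κtilde x)
    (u v : EuclideanSpace ℝ (Fin d) → ℝ)
    (hv : Differentiable ℝ v)
    (hint2 : IntegrableOn (fun x => v x * (inner ℝ (κ x (gradient u x)) (gradient χ x) : ℝ)) ω)
    (hint3 : IntegrableOn (fun x => χ x * (inner ℝ (κ x (gradient u x)) (gradient v x) : ℝ)) ω)
    (hint4 : IntegrableOn (fun x => κbar x * ‖gradient u x‖ ^ 2) ω)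
    (hint5 : IntegrableOn (fun x => κbar x * ‖gradient v x‖ ^ 2) ω)
    (hint6 : IntegrableOn (fun x => κtilde x * v x ^ 2) ω) :
    |∫ x in ω, (inner ℝ (κ x (gradient u x)) (gradient (fun y => χ y * v y) x) : ℝ)|
      ≤ C₁ * Real.sqrt (∫ x in ω, κbar x * ‖gradient u x‖ ^ 2)
          * (Real.sqrt (∫ x in ω, κbar x * ‖gradient v x‖ ^ 2)
              + Real.sqrt (∫ x in ω, κtilde x * v x ^ 2)) := by
  have hflux : ∀ x, ‖κ x (gradient u x)‖ ≤ C₁ * (κbar x * ‖gradient u x‖) := fun x => by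
    simpa [hκ0 x] using hlip x (gradient u x) 0
  have hsplit : ∫ x in ω, (inner ℝ (κ x (gradient u x)) (gradient (fun y => χ y * v y) x) : ℝ)
      = (∫ x in ω, χ x * (inner ℝ (κ x (gradient u x)) (gradient v x) : ℝ))
        + ∫ x in ω, v x * (inner ℝ (κ x (gradient u x)) (gradient χ x) : ℝ) := by
    rw [← integral_add hint3 hint2]
    congr 1 with x
    rw [gradient_mul (hχ x) (hv x), inner_add_right, real_inner_smul_right, real_inner_smul_right]
  have hu_nonneg : ∀ᵐ x ∂volume.restrict ω, 0 ≤ κbar x * ‖gradient u x‖ ^ 2 :=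
    ae_of_all _ fun x => mul_nonneg (hκbar x) (sq_nonneg _)
  have hinterior := abs_integral_le_mul_sqrt_mul_sqrt hC₁.le hu_nonneg
    (ae_of_all _ fun x => mul_nonneg (hκbar x) (sq_nonneg _)) hint4 hint5
    (ae_of_all _ fun x => abs_mul_inner_le_mul_sqrt hC₁.le (hκbar x) (hflux x)
      (mul_le_of_le_one_right (mul_nonneg (hκbar x) (sq_nonneg _))
        ((sq_le_one_iff_abs_le_one _).2 (hχ_bdd x))))
  have hboundary := abs_integral_le_mul_sqrt_mul_sqrt hC₁.le hu_nonneg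
    (ae_of_all _ fun x => mul_nonneg (hκtilde x) (sq_nonneg _)) hint4 hint6
    ((ae_restrict_mem hω).mono fun x hx => abs_mul_inner_le_mul_sqrt hC₁.le (hκbar x) (hflux x)
      (mul_le_mul_of_nonneg_right (hdom x hx) (sq_nonneg _)))
  rw [hsplit, mul_add]
  exact (abs_add_le _ _).trans (add_le_add hinterior hboundary)

/-- Partition-of-unity energy estimate (Lemma 2):
`|∫_ω κ(x,∇u)·∇(χ v)| ≤ C₁ ‖u‖_{a(ω)} (‖v‖_{a(ω)} + ‖v‖_{s(ω)})`. -/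
theorem partition_of_unity_energy_estimate
    {d : ℕ} (ω : Set (EuclideanSpace ℝ (Fin d))) (hω : MeasurableSet ω)
    (κ : EuclideanSpace ℝ (Fin d) → EuclideanSpace ℝ (Fin d) → EuclideanSpace ℝ (Fin d))
    (hκ0 : ∀ x, κ x 0 = 0)
    (κbar : EuclideanSpace ℝ (Fin d) → ℝ) (hκbar : ∀ x, 0 ≤ κbar x)
    (C₁ : ℝ) (hC₁ : 0 < C₁)
    (hlip : ∀ x z v, ‖κ x z - κ x v‖ ≤ C₁ * (κbar x * ‖z - v‖))
    (χ : EuclideanSpace ℝ (Fin d) → ℝ) (hχ : Differentiable ℝ χ)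
    (hχ_bdd : ∀ x, |χ x| ≤ 1)
    (κtilde : EuclideanSpace ℝ (Fin d) → ℝ)
    (hκtilde_meas : Measurable κtilde) (hκtilde : ∀ x, 0 ≤ κtilde x)
    (hdom : ∀ x ∈ ω, κbar x * ‖gradient χ x‖ ^ 2 ≤ κtilde x)
    (u v : EuclideanSpace ℝ (Fin d) → ℝ)
    (hu : Differentiable ℝ u) (hv : Differentiable ℝ v)
    (hint1 : IntegrableOn
      (fun x => (inner ℝ (κ x (gradient u x)) (gradient (fun y => χ y * v y) x) : ℝ)) ω)
    (hint2 : IntegrableOn (fun x => v x * (inner ℝ (κ x (gradient u x)) (gradient χ x) : ℝ)) ω)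
    (hint3 : IntegrableOn (fun x => χ x * (inner ℝ (κ x (gradient u x)) (gradient v x) : ℝ)) ω)
    (hint4 : IntegrableOn (fun x => κbar x * ‖gradient u x‖ ^ 2) ω)
    (hint5 : IntegrableOn (fun x => κbar x * ‖gradient v x‖ ^ 2) ω)
    (hint6 : IntegrableOn (fun x => κtilde x * v x ^ 2) ω) :
    |∫ x in ω, (inner ℝ (κ x (gradient u x)) (gradient (fun y => χ y * v y) x) : ℝ)|
      ≤ C₁ * Real.sqrt (∫ x in ω, κbar x * ‖gradient u x‖ ^ 2)
          * (Real.sqrt (∫ x in ω, κbar x * ‖gradient v x‖ ^ 2)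
              + Real.sqrt (∫ x in ω, κtilde x * v x ^ 2)) :=
  partition_of_unity_energy_estimate_general ω hω κ hκ0 κbar hκbar C₁ hC₁ hlip χ hχ hχ_bdd κtilde
    hκtilde hdom u v hv hint2 hint3 hint4 hint5 hint6
end

section
/- Caccioppoli-type annulus estimate (inequality (est1) in the proof of Lemma 5): Let ω' ⊆ ω ⊆ ℝ^d be measurable sets, let κ : ℝ^d × ℝ^d → ℝ^d satisfy the Lipschitz condition |κ(x,z) − κ(x,v)| ≤ C₁ κ̄(x)|z − v| (κ̄ ≥ 0, C₁ > 0), and let κ̃ : ℝ^d → ℝ be a nonnegative measurable weight. Let χ : ℝ^d → ℝ be differentiable with 0 ≤ χ ≤ 1, χ = 1 on ω \ ω', ∇χ supported in ω' (so ∇χ = 0 and 1 − χ = 0 on ω \ ω'), and κ̄(x)|∇χ(x)|² ≤ κ̃(x) on ω. Let f, g : ℝ^d → ℝ be differentiable, put η = f − g, let μ : ℝ^d → ℝ be measurable, let C₂ > 0, and assume all relevant integrands are integrable. Assume: (a) C₂ ∫_ω κ̄ |∇η|² dx ≤ ∫_ω (κ(x,∇f) − κ(x,∇g))·∇η dx;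 (b) ∫_ω (κ(x,∇f) − κ(x,∇g))·∇(χη) dx = ∫_{ω'} κ̃ μ χ η dx. Then C₂ ∫_ω κ̄ |∇η|² dx ≤ C₁ ‖η‖_{a(ω')} ( ‖η‖_{a(ω')} + ‖η‖_{s(ω')} ) + ‖η‖_{s(ω')} ‖μ‖_{s(ω')}, where ‖η‖_{a(ω')} = (∫_{ω'} κ̄ |∇η|²)^{1/2}, ‖η‖_{s(ω')} = (∫_{ω'} κ̃ η²)^{1/2} and ‖μ‖_{s(ω')} = (∫_{ω'} κ̃ μ²)^{1/2}. -/
open MeasureTheory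

/-- Cauchy–Schwarz inequality for integrals of nonnegative functions. -/
lemma integral_cauchy_schwarz_aux {α : Type*} [MeasurableSpace α] (ν : Measure α) (u v : α → ℝ)
    (hu0 : ∀ x, 0 ≤ u x) (hv0 : ∀ x, 0 ≤ v x)
    (hu : Integrable (fun x => u x ^ 2) ν) (hv : Integrable (fun x => v x ^ 2) ν)
    (huv : Integrable (fun x => u x * v x) ν) :
    ∫ x, u x * v x ∂ν ≤ Real.sqrt (∫ x, u x ^ 2 ∂ν) * Real.sqrt (∫ x, v x ^ 2 ∂ν) := by
  set A := ∫ x, u x ^ 2 ∂ν with hAdef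
  set B := ∫ x, u x * v x ∂ν with hBdef
  set C := ∫ x, v x ^ 2 ∂ν with hCdef
  have hA : 0 ≤ A := integral_nonneg fun x => sq_nonneg _
  have hC : 0 ≤ C := integral_nonneg fun x => sq_nonneg _
  have hB : 0 ≤ B := integral_nonneg fun x => mul_nonneg (hu0 x) (hv0 x)
  have key : ∀ t : ℝ, 0 ≤ A * (t * t) + (-2 * B) * t + C := by
    intro t
    have h0 : 0 ≤ ∫ x, (t * u x - v x) ^ 2 ∂ν := integral_nonneg fun x => sq_nonneg _
    have hexp : ∫ x, (t * u x - v x) ^ 2 ∂ν = A * (t * t) + (-2 * B) * t + C := by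
      have heq : (fun x => (t * u x - v x) ^ 2)
          = fun x => t ^ 2 * u x ^ 2 + ((-2 * t) * (u x * v x) + v x ^ 2) := by
        funext x; ring
      have s1 : ∫ x, (t * u x - v x) ^ 2 ∂ν
          = (∫ x, t ^ 2 * u x ^ 2 ∂ν) + ∫ x, ((-2 * t) * (u x * v x) + v x ^ 2) ∂ν := by
        rw [heq]; exact integral_add (hu.const_mul _) ((huv.const_mul _).add hv)
      have s2 : ∫ x, ((-2 * t) * (u x * v x) + v x ^ 2) ∂ν
          = (∫ x, (-2 * t) * (u x * v x) ∂ν) + ∫ x, v x ^ 2 ∂ν :=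
        integral_add (huv.const_mul _) hv
      rw [s1, s2, integral_const_mul, integral_const_mul, ← hAdef, ← hBdef, ← hCdef]
      ring
    linarith [hexp ▸ h0]
  have hd := discrim_le_zero key
  rw [discrim] at hd
  have hB2 : B ^ 2 ≤ A * C := by nlinarith
  calc B = Real.sqrt (B ^ 2) := by rw [Real.sqrt_sq hB]
    _ ≤ Real.sqrt (A * C) := Real.sqrt_le_sqrt hB2
    _ = Real.sqrt A * Real.sqrt C := Real.sqrt_mul hA _

/-- Abstract form of the Caccioppoli-type annulus estimate. -/
lemma caccioppoli_abstract {α : Type*} [MeasurableSpace α] {ν : Measure α} {ω' ω : Set α}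
    (hsub : ω' ⊆ ω) (hω : MeasurableSet ω) (hω' : MeasurableSet ω')
    (C₁ C₂ : ℝ) (hC₁ : 0 < C₁)
    (a e m r χ p2 p3 : α → ℝ)
    (ha0 : ∀ x, 0 ≤ a x) (he0 : ∀ x, 0 ≤ e x) (hm0 : ∀ x, 0 ≤ m x)
    (hχ0 : ∀ x, 0 ≤ χ x) (hχ1 : ∀ x, χ x ≤ 1)
    (hχm : AEStronglyMeasurable χ (ν.restrict ω'))
    (H1 : ∀ x ∈ ω \ ω', p3 x = p2 x)
    (H2 : ∀ x, |p2 x| ≤ C₁ * a x)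
    (H3 : ∀ x ∈ ω', p2 x - p3 x - (1 - χ x) * p2 x ≤ C₁ * (Real.sqrt (a x) * Real.sqrt (e x)))
    (H4 : ∀ x ∈ ω', r x ≤ Real.sqrt (m x) * Real.sqrt (e x))
    (hia : IntegrableOn a ω ν) (hie : IntegrableOn e ω' ν) (him : IntegrableOn m ω' ν)
    (hir : IntegrableOn r ω' ν) (hip2 : IntegrableOn p2 ω ν) (hip3 : IntegrableOn p3 ω ν)
    (hA : C₂ * ∫ x in ω, a x ∂ν ≤ ∫ x in ω, p2 x ∂ν)
    (hB : ∫ x in ω, p3 x ∂ν = ∫ x in ω', r x ∂ν) :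
    C₂ * ∫ x in ω, a x ∂ν
      ≤ C₁ * Real.sqrt (∫ x in ω', a x ∂ν)
          * (Real.sqrt (∫ x in ω', a x ∂ν) + Real.sqrt (∫ x in ω', e x ∂ν))
        + Real.sqrt (∫ x in ω', e x ∂ν) * Real.sqrt (∫ x in ω', m x ∂ν) := by
  have hia' : IntegrableOn a ω' ν := hia.mono_set hsub
  have hip2' : IntegrableOn p2 ω' ν := hip2.mono_set hsub
  have hA'0 : 0 ≤ ∫ x in ω', a x ∂ν := setIntegral_nonneg hω' fun x _ => ha0 x
  -- the cut-off part
  set h1 : α → ℝ := fun x => (1 - χ x) * p2 x with hh1def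
  have hih1 : IntegrableOn h1 ω' ν := by
    refine (hia'.const_mul C₁).mono'
      ((aestronglyMeasurable_const.sub hχm).mul hip2'.aestronglyMeasurable)
      (ae_of_all _ fun x => ?_)
    have h2 := H2 x
    have := abs_nonneg (p2 x)
    have habs : |h1 x| = |1 - χ x| * |p2 x| := abs_mul _ _
    have h1χ : |1 - χ x| ≤ 1 := by
      rw [abs_le]; constructor <;> nlinarith [hχ0 x, hχ1 x]
    calc ‖h1 x‖ = |1 - χ x| * |p2 x| := habs
      _ ≤ 1 * |p2 x| := mul_le_mul_of_nonneg_right h1χ (abs_nonneg _)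
      _ = |p2 x| := one_mul _
      _ ≤ C₁ * a x := h2
  set q : α → ℝ := fun x => p2 x - p3 x with hqdef
  have hiq : IntegrableOn q ω ν := hip2.sub hip3
  have hiq' : IntegrableOn q ω' ν := hiq.mono_set hsub
  -- split the integral of q over ω
  have hsplit : ∫ x in ω, q x ∂ν = ∫ x in ω', q x ∂ν := by
    have hzero : ∫ x in ω \ ω', q x ∂ν = 0 := by
      rw [setIntegral_congr_fun (g := fun _ => (0 : ℝ)) (hω.diff hω')
        (fun x hx => by show p2 x - p3 x = 0; rw [H1 x hx, sub_self])]
      simp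
    calc ∫ x in ω, q x ∂ν = ∫ x in ω' ∪ (ω \ ω'), q x ∂ν := by
          rw [Set.union_diff_cancel hsub]
      _ = (∫ x in ω', q x ∂ν) + ∫ x in ω \ ω', q x ∂ν :=
          setIntegral_union Set.disjoint_sdiff_right (hω.diff hω') hiq'
            (hiq.mono_set Set.diff_subset)
      _ = ∫ x in ω', q x ∂ν := by rw [hzero, add_zero]
  -- square roots
  set u : α → ℝ := fun x => Real.sqrt (a x) with hudef
  set v : α → ℝ := fun x => Real.sqrt (e x) with hvdef
  set w : α → ℝ := fun x => Real.sqrt (m x) with hwdef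
  have hu2 : (fun x => u x ^ 2) = a := funext fun x => Real.sq_sqrt (ha0 x)
  have hv2 : (fun x => v x ^ 2) = e := funext fun x => Real.sq_sqrt (he0 x)
  have hw2 : (fun x => w x ^ 2) = m := funext fun x => Real.sq_sqrt (hm0 x)
  have hum : AEStronglyMeasurable u (ν.restrict ω') :=
    Real.continuous_sqrt.comp_aestronglyMeasurable hia'.aestronglyMeasurable
  have hvm : AEStronglyMeasurable v (ν.restrict ω') :=
    Real.continuous_sqrt.comp_aestronglyMeasurable hie.aestronglyMeasurable
  have hwm : AEStronglyMeasurable w (ν.restrict ω') :=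
    Real.continuous_sqrt.comp_aestronglyMeasurable him.aestronglyMeasurable
  have hiu2 : Integrable (fun x => u x ^ 2) (ν.restrict ω') := by rw [hu2]; exact hia'
  have hiv2 : Integrable (fun x => v x ^ 2) (ν.restrict ω') := by rw [hv2]; exact hie
  have hiw2 : Integrable (fun x => w x ^ 2) (ν.restrict ω') := by rw [hw2]; exact him
  have hiuv : Integrable (fun x => u x * v x) (ν.restrict ω') := by
    refine (hia'.add hie).mono' (hum.mul hvm) (ae_of_all _ fun x => ?_)
    have h1 := Real.sq_sqrt (ha0 x); have h2 := Real.sq_sqrt (he0 x)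
    have h3 := Real.sqrt_nonneg (a x); have h4 := Real.sqrt_nonneg (e x)
    rw [Real.norm_eq_abs, abs_of_nonneg (mul_nonneg h3 h4)]
    simp only [Pi.add_apply]
    nlinarith [sq_nonneg (Real.sqrt (a x) - Real.sqrt (e x))]
  have hiwv : Integrable (fun x => w x * v x) (ν.restrict ω') := by
    refine (him.add hie).mono' (hwm.mul hvm) (ae_of_all _ fun x => ?_)
    have h1 := Real.sq_sqrt (hm0 x); have h2 := Real.sq_sqrt (he0 x)
    have h3 := Real.sqrt_nonneg (m x); have h4 := Real.sqrt_nonneg (e x)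
    rw [Real.norm_eq_abs, abs_of_nonneg (mul_nonneg h3 h4)]
    simp only [Pi.add_apply]
    nlinarith [sq_nonneg (Real.sqrt (m x) - Real.sqrt (e x))]
  have hcs1 : ∫ x in ω', u x * v x ∂ν
      ≤ Real.sqrt (∫ x in ω', a x ∂ν) * Real.sqrt (∫ x in ω', e x ∂ν) := by
    have := integral_cauchy_schwarz_aux (ν.restrict ω') u v
      (fun x => Real.sqrt_nonneg _) (fun x => Real.sqrt_nonneg _) hiu2 hiv2 hiuv
    rwa [hu2, hv2] at this
  have hcs2 : ∫ x in ω', w x * v x ∂ν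
      ≤ Real.sqrt (∫ x in ω', m x ∂ν) * Real.sqrt (∫ x in ω', e x ∂ν) := by
    have := integral_cauchy_schwarz_aux (ν.restrict ω') w v
      (fun x => Real.sqrt_nonneg _) (fun x => Real.sqrt_nonneg _) hiw2 hiv2 hiwv
    rwa [hw2, hv2] at this
  -- the three estimates
  have est1 : ∫ x in ω', h1 x ∂ν
      ≤ C₁ * (Real.sqrt (∫ x in ω', a x ∂ν) * Real.sqrt (∫ x in ω', a x ∂ν)) := by
    have step : ∫ x in ω', h1 x ∂ν ≤ ∫ x in ω', C₁ * a x ∂ν := by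
      refine setIntegral_mono_on hih1 (hia'.const_mul C₁) hω' fun x _ => ?_
      have h2 := H2 x
      show (1 - χ x) * p2 x ≤ C₁ * a x
      nlinarith [mul_nonneg (by linarith [hχ1 x] : (0:ℝ) ≤ 1 - χ x)
          (by linarith [le_abs_self (p2 x)] : (0:ℝ) ≤ |p2 x| - p2 x),
        mul_nonneg (hχ0 x) (abs_nonneg (p2 x))]
    rw [integral_const_mul] at step
    rwa [Real.mul_self_sqrt hA'0]
  have hqh1 : IntegrableOn (fun x => q x - h1 x) ω' ν := hiq'.sub hih1
  have est2 : ∫ x in ω', (q x - h1 x) ∂ν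
      ≤ C₁ * (Real.sqrt (∫ x in ω', a x ∂ν) * Real.sqrt (∫ x in ω', e x ∂ν)) := by
    have step : ∫ x in ω', (q x - h1 x) ∂ν ≤ ∫ x in ω', C₁ * (u x * v x) ∂ν := by
      refine setIntegral_mono_on hqh1 (hiuv.const_mul C₁) hω' fun x hx => H3 x hx
    rw [integral_const_mul] at step
    exact step.trans (mul_le_mul_of_nonneg_left hcs1 hC₁.le)
  have est3 : ∫ x in ω', r x ∂ν
      ≤ Real.sqrt (∫ x in ω', e x ∂ν) * Real.sqrt (∫ x in ω', m x ∂ν) := by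
    have step : ∫ x in ω', r x ∂ν ≤ ∫ x in ω', w x * v x ∂ν :=
      setIntegral_mono_on hir hiwv hω' fun x hx => H4 x hx
    exact step.trans (by rw [mul_comm]; exact hcs2)
  -- assemble
  have hdec : ∫ x in ω', q x ∂ν
      = (∫ x in ω', h1 x ∂ν) + ∫ x in ω', (q x - h1 x) ∂ν := by
    rw [← integral_add hih1 hqh1]
    exact integral_congr_ae (ae_of_all _ fun x => by ring)
  have hqint : ∫ x in ω, q x ∂ν = (∫ x in ω, p2 x ∂ν) - ∫ x in ω, p3 x ∂ν :=
    integral_sub hip2 hip3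
  calc C₂ * ∫ x in ω, a x ∂ν ≤ ∫ x in ω, p2 x ∂ν := hA
    _ = (∫ x in ω', r x ∂ν) + ((∫ x in ω', h1 x ∂ν) + ∫ x in ω', (q x - h1 x) ∂ν) := by
        rw [← hdec, ← hsplit, hqint, hB]; ring
    _ ≤ Real.sqrt (∫ x in ω', e x ∂ν) * Real.sqrt (∫ x in ω', m x ∂ν)
        + (C₁ * (Real.sqrt (∫ x in ω', a x ∂ν) * Real.sqrt (∫ x in ω', a x ∂ν))
          + C₁ * (Real.sqrt (∫ x in ω', a x ∂ν) * Real.sqrt (∫ x in ω', e x ∂ν))) :=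
        add_le_add est3 (add_le_add est1 est2)
    _ = C₁ * Real.sqrt (∫ x in ω', a x ∂ν)
          * (Real.sqrt (∫ x in ω', a x ∂ν) + Real.sqrt (∫ x in ω', e x ∂ν))
        + Real.sqrt (∫ x in ω', e x ∂ν) * Real.sqrt (∫ x in ω', m x ∂ν) := by ring

/-- Caccioppoli-type annulus estimate (inequality (est1) in the proof of Lemma 5). -/
theorem caccioppoli_type_annulus_estimate
    {d : ℕ} (ω' ω : Set (EuclideanSpace ℝ (Fin d)))
    (hsub : ω' ⊆ ω) (hω : MeasurableSet ω) (hω' : MeasurableSet ω')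
    (κ : EuclideanSpace ℝ (Fin d) → EuclideanSpace ℝ (Fin d) → EuclideanSpace ℝ (Fin d))
    (κbar : EuclideanSpace ℝ (Fin d) → ℝ) (hκbar : ∀ x, 0 ≤ κbar x)
    (C₁ : ℝ) (hC₁ : 0 < C₁)
    (hlip : ∀ x z v, ‖κ x z - κ x v‖ ≤ C₁ * (κbar x * ‖z - v‖))
    (κtilde : EuclideanSpace ℝ (Fin d) → ℝ)
    (hκtilde_meas : Measurable κtilde) (hκtilde : ∀ x, 0 ≤ κtilde x)
    (χ : EuclideanSpace ℝ (Fin d) → ℝ) (hχ : Differentiable ℝ χ)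
    (hχ0 : ∀ x, 0 ≤ χ x) (hχ1 : ∀ x, χ x ≤ 1)
    (hχ_one : ∀ x ∈ ω \ ω', χ x = 1)
    (hχ_grad : ∀ x ∈ ω \ ω', gradient χ x = 0)
    (hdom : ∀ x ∈ ω, κbar x * ‖gradient χ x‖ ^ 2 ≤ κtilde x)
    (f g : EuclideanSpace ℝ (Fin d) → ℝ)
    (hf : Differentiable ℝ f) (hg : Differentiable ℝ g)
    (μ : EuclideanSpace ℝ (Fin d) → ℝ) (hμ : Measurable μ)
    (C₂ : ℝ) (hC₂ : 0 < C₂)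
    (hint1 : IntegrableOn (fun x => κbar x * ‖gradient (f - g) x‖ ^ 2) ω)
    (hint2 : IntegrableOn
      (fun x => (inner ℝ (κ x (gradient f x) - κ x (gradient g x)) (gradient (f - g) x) : ℝ)) ω)
    (hint3 : IntegrableOn
      (fun x => (inner ℝ (κ x (gradient f x) - κ x (gradient g x))
        (gradient (fun y => χ y * (f - g) y) x) : ℝ)) ω)
    (hint4 : IntegrableOn (fun x => κtilde x * (μ x * (χ x * (f - g) x))) ω')
    (hint5 : IntegrableOn (fun x => κtilde x * (f - g) x ^ 2) ω')
    (hint6 : IntegrableOn (fun x => κtilde x * μ x ^ 2) ω')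
    (ha : C₂ * (∫ x in ω, κbar x * ‖gradient (f - g) x‖ ^ 2)
            ≤ ∫ x in ω,
                (inner ℝ (κ x (gradient f x) - κ x (gradient g x)) (gradient (f - g) x) : ℝ))
    (hb : (∫ x in ω, (inner ℝ (κ x (gradient f x) - κ x (gradient g x))
            (gradient (fun y => χ y * (f - g) y) x) : ℝ))
            = ∫ x in ω', κtilde x * (μ x * (χ x * (f - g) x))) :
    C₂ * (∫ x in ω, κbar x * ‖gradient (f - g) x‖ ^ 2)
      ≤ C₁ * Real.sqrt (∫ x in ω', κbar x * ‖gradient (f - g) x‖ ^ 2)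
          * (Real.sqrt (∫ x in ω', κbar x * ‖gradient (f - g) x‖ ^ 2)
              + Real.sqrt (∫ x in ω', κtilde x * (f - g) x ^ 2))
        + Real.sqrt (∫ x in ω', κtilde x * (f - g) x ^ 2)
            * Real.sqrt (∫ x in ω', κtilde x * μ x ^ 2) := by
  have hη : Differentiable ℝ (f - g) := hf.sub hg
  -- gradient of a difference
  have hgrad_sub : ∀ x, gradient (f - g) x = gradient f x - gradient g x := by
    intro x
    unfold gradient
    rw [show (f - g) = fun y => f y - g y from rfl, fderiv_fun_sub (hf x) (hg x), map_sub]
  -- gradient of a product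
  have hgrad_mul : ∀ x, gradient (fun y => χ y * (f - g) y) x
      = χ x • gradient (f - g) x + (f - g) x • gradient χ x := by
    intro x
    unfold gradient
    rw [fderiv_fun_mul (hχ x) (hη x), map_add]
    congr 1 <;> · rw [LinearIsometryEquiv.map_smulₛₗ]; simp
  -- Lipschitz bound on the flux difference
  have hT : ∀ x, ‖κ x (gradient f x) - κ x (gradient g x)‖
      ≤ C₁ * (κbar x * ‖gradient (f - g) x‖) := by
    intro x
    rw [hgrad_sub x]
    exact hlip x (gradient f x) (gradient g x)
  -- expansion of the inner product with the product gradient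
  have hp3 : ∀ x, (inner ℝ (κ x (gradient f x) - κ x (gradient g x))
        (gradient (fun y => χ y * (f - g) y) x) : ℝ)
      = χ x * (inner ℝ (κ x (gradient f x) - κ x (gradient g x)) (gradient (f - g) x) : ℝ)
        + (f - g) x * (inner ℝ (κ x (gradient f x) - κ x (gradient g x)) (gradient χ x) : ℝ) := by
    intro x
    rw [hgrad_mul x, inner_add_right, real_inner_smul_right, real_inner_smul_right]
  refine caccioppoli_abstract hsub hω hω' C₁ C₂ hC₁
    (fun x => κbar x * ‖gradient (f - g) x‖ ^ 2)
    (fun x => κtilde x * (f - g) x ^ 2)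
    (fun x => κtilde x * μ x ^ 2)
    (fun x => κtilde x * (μ x * (χ x * (f - g) x)))
    χ
    (fun x => (inner ℝ (κ x (gradient f x) - κ x (gradient g x)) (gradient (f - g) x) : ℝ))
    (fun x => (inner ℝ (κ x (gradient f x) - κ x (gradient g x))
        (gradient (fun y => χ y * (f - g) y) x) : ℝ))
    (fun x => mul_nonneg (hκbar x) (sq_nonneg _))
    (fun x => mul_nonneg (hκtilde x) (sq_nonneg _))
    (fun x => mul_nonneg (hκtilde x) (sq_nonneg _))
    hχ0 hχ1 hχ.continuous.aestronglyMeasurable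
    ?_ ?_ ?_ ?_ hint1 hint5 hint6 hint4 hint2 hint3 ha hb
  · -- H1 : p3 = p2 on ω \ ω'
    intro x hx
    have h := hp3 x
    rw [hχ_one x hx, hχ_grad x hx, inner_zero_right] at h
    simpa using h
  · -- H2 : |p2| ≤ C₁ * a
    intro x
    show |(inner ℝ (κ x (gradient f x) - κ x (gradient g x)) (gradient (f - g) x) : ℝ)|
      ≤ C₁ * (κbar x * ‖gradient (f - g) x‖ ^ 2)
    calc |(inner ℝ (κ x (gradient f x) - κ x (gradient g x)) (gradient (f - g) x) : ℝ)|
        ≤ ‖κ x (gradient f x) - κ x (gradient g x)‖ * ‖gradient (f - g) x‖ :=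
          abs_real_inner_le_norm _ _
      _ ≤ (C₁ * (κbar x * ‖gradient (f - g) x‖)) * ‖gradient (f - g) x‖ :=
          mul_le_mul_of_nonneg_right (hT x) (norm_nonneg _)
      _ = C₁ * (κbar x * ‖gradient (f - g) x‖ ^ 2) := by ring
  · -- H3 : annulus term with ∇χ
    intro x hx
    have habs : |(inner ℝ (κ x (gradient f x) - κ x (gradient g x)) (gradient χ x) : ℝ)|
        ≤ ‖κ x (gradient f x) - κ x (gradient g x)‖ * ‖gradient χ x‖ :=
      abs_real_inner_le_norm _ _
    have e1 : Real.sqrt (κbar x * ‖gradient (f - g) x‖ ^ 2)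
        = Real.sqrt (κbar x) * ‖gradient (f - g) x‖ := by
      rw [Real.sqrt_mul (hκbar x), Real.sqrt_sq (norm_nonneg _)]
    have e2 : Real.sqrt (κtilde x * (f - g) x ^ 2)
        = Real.sqrt (κtilde x) * |(f - g) x| := by
      rw [Real.sqrt_mul (hκtilde x), Real.sqrt_sq_eq_abs]
    have e3 : Real.sqrt (κbar x) * ‖gradient χ x‖ ≤ Real.sqrt (κtilde x) := by
      rw [← Real.sqrt_sq (norm_nonneg (gradient χ x)), ← Real.sqrt_mul (hκbar x)]
      exact Real.sqrt_le_sqrt (hdom x (hsub hx))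
    have e4 : Real.sqrt (κbar x) * Real.sqrt (κbar x) = κbar x :=
      Real.mul_self_sqrt (hκbar x)
    have e5 : κbar x * ‖gradient (f - g) x‖ * ‖gradient χ x‖ * |(f - g) x|
        ≤ (Real.sqrt (κbar x) * ‖gradient (f - g) x‖)
          * (Real.sqrt (κtilde x) * |(f - g) x|) := by
      have eq1 : κbar x * ‖gradient (f - g) x‖ * ‖gradient χ x‖ * |(f - g) x|
          = (Real.sqrt (κbar x) * ‖gradient (f - g) x‖)
            * ((Real.sqrt (κbar x) * ‖gradient χ x‖) * |(f - g) x|) := by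
        linear_combination (-(‖gradient (f - g) x‖ * ‖gradient χ x‖ * |(f - g) x|)) * e4
      rw [eq1]
      exact mul_le_mul_of_nonneg_left
        (mul_le_mul_of_nonneg_right e3 (abs_nonneg _))
        (mul_nonneg (Real.sqrt_nonneg _) (norm_nonneg _))
    show (inner ℝ (κ x (gradient f x) - κ x (gradient g x)) (gradient (f - g) x) : ℝ)
        - (inner ℝ (κ x (gradient f x) - κ x (gradient g x))
            (gradient (fun y => χ y * (f - g) y) x) : ℝ)
        - (1 - χ x) * (inner ℝ (κ x (gradient f x) - κ x (gradient g x))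
            (gradient (f - g) x) : ℝ)
      ≤ C₁ * (Real.sqrt (κbar x * ‖gradient (f - g) x‖ ^ 2)
          * Real.sqrt (κtilde x * (f - g) x ^ 2))
    calc (inner ℝ (κ x (gradient f x) - κ x (gradient g x)) (gradient (f - g) x) : ℝ)
          - (inner ℝ (κ x (gradient f x) - κ x (gradient g x))
              (gradient (fun y => χ y * (f - g) y) x) : ℝ)
          - (1 - χ x) * (inner ℝ (κ x (gradient f x) - κ x (gradient g x))
              (gradient (f - g) x) : ℝ)
        = -((f - g) x * (inner ℝ (κ x (gradient f x) - κ x (gradient g x))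
              (gradient χ x) : ℝ)) := by rw [hp3 x]; ring
      _ ≤ |(f - g) x * (inner ℝ (κ x (gradient f x) - κ x (gradient g x))
              (gradient χ x) : ℝ)| := neg_le_abs _
      _ = |(f - g) x| * |(inner ℝ (κ x (gradient f x) - κ x (gradient g x))
              (gradient χ x) : ℝ)| := abs_mul _ _
      _ ≤ |(f - g) x| * (‖κ x (gradient f x) - κ x (gradient g x)‖ * ‖gradient χ x‖) :=
          mul_le_mul_of_nonneg_left habs (abs_nonneg _)
      _ ≤ |(f - g) x| * ((C₁ * (κbar x * ‖gradient (f - g) x‖)) * ‖gradient χ x‖) :=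
          mul_le_mul_of_nonneg_left
            (mul_le_mul_of_nonneg_right (hT x) (norm_nonneg _)) (abs_nonneg _)
      _ = C₁ * (κbar x * ‖gradient (f - g) x‖ * ‖gradient χ x‖ * |(f - g) x|) := by ring
      _ ≤ C₁ * ((Real.sqrt (κbar x) * ‖gradient (f - g) x‖)
            * (Real.sqrt (κtilde x) * |(f - g) x|)) :=
          mul_le_mul_of_nonneg_left e5 hC₁.le
      _ = C₁ * (Real.sqrt (κbar x * ‖gradient (f - g) x‖ ^ 2)
            * Real.sqrt (κtilde x * (f - g) x ^ 2)) := by rw [e1, e2]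
  · -- H4 : source term
    intro x _
    have e2 : Real.sqrt (κtilde x * (f - g) x ^ 2)
        = Real.sqrt (κtilde x) * |(f - g) x| := by
      rw [Real.sqrt_mul (hκtilde x), Real.sqrt_sq_eq_abs]
    have e6 : Real.sqrt (κtilde x * μ x ^ 2) = Real.sqrt (κtilde x) * |μ x| := by
      rw [Real.sqrt_mul (hκtilde x), Real.sqrt_sq_eq_abs]
    have e7 : Real.sqrt (κtilde x) * Real.sqrt (κtilde x) = κtilde x :=
      Real.mul_self_sqrt (hκtilde x)
    have hpt : μ x * (χ x * (f - g) x) ≤ |μ x| * |(f - g) x| := by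
      calc μ x * (χ x * (f - g) x) ≤ |μ x * (χ x * (f - g) x)| := le_abs_self _
        _ = |μ x| * (|χ x| * |(f - g) x|) := by rw [abs_mul, abs_mul]
        _ ≤ |μ x| * (1 * |(f - g) x|) := by
            refine mul_le_mul_of_nonneg_left
              (mul_le_mul_of_nonneg_right ?_ (abs_nonneg _)) (abs_nonneg _)
            rw [abs_of_nonneg (hχ0 x)]; exact hχ1 x
        _ = |μ x| * |(f - g) x| := by ring
    show κtilde x * (μ x * (χ x * (f - g) x))
      ≤ Real.sqrt (κtilde x * μ x ^ 2) * Real.sqrt (κtilde x * (f - g) x ^ 2)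
    calc κtilde x * (μ x * (χ x * (f - g) x)) ≤ κtilde x * (|μ x| * |(f - g) x|) :=
          mul_le_mul_of_nonneg_left hpt (hκtilde x)
      _ = (Real.sqrt (κtilde x) * |μ x|) * (Real.sqrt (κtilde x) * |(f - g) x|) := by
          linear_combination (-(|μ x| * |(f - g) x|)) * e7
      _ = Real.sqrt (κtilde x * μ x ^ 2) * Real.sqrt (κtilde x * (f - g) x ^ 2) := by
          rw [e2, e6]
end
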